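/- arXiv:1811.10446 — 3 statements merged into one kernel-verified Lean document; each statement's English description precedes it below -/
import Mathlib

section
/- If T_X(A) = P_X(A) for all measurable sets A, then this common set function is countably additive, i.e., it is a probability measure. -/
/-!
The hitting functional `A ↦ μ {ω | (X ω ∩ A).Nonempty}` is countably subadditive, since `X ω` meets
`⋃ i, A i` iff it meets some `A i`. The containment functional `A ↦ μ {ω | X ω ⊆ A}` is countably
superadditive on disjoint sets, since a nonempty `X ω` lies in at most one of them, so the events
`{X ⊆ A i}` are a.e. disjoint. When the two functionals agree, both inequalities give countable
additivity.
-/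

open MeasureTheory

section RandomSet

variable {Ω α : Type*} [MeasurableSpace Ω] {μ : Measure Ω} {X : Ω → Set α}

lemma measure_inter_iUnion_nonempty_le (A : ℕ → Set α) :
    μ {ω | (X ω ∩ ⋃ i, A i).Nonempty} ≤ ∑' i, μ {ω | (X ω ∩ A i).Nonempty} := by
  have hunion : {ω | (X ω ∩ ⋃ i, A i).Nonempty} = ⋃ i, {ω | (X ω ∩ A i).Nonempty} := by
    ext ω
    simp only [Set.inter_iUnion, Set.nonempty_iUnion, Set.mem_ofPred_eq, Set.mem_iUnion]
  rw [hunion]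
  exact measure_iUnion_le _

lemma aedisjoint_setOf_subset (hne : ∀ᵐ ω ∂μ, (X ω).Nonempty) {A B : Set α}
    (hAB : Disjoint A B) : AEDisjoint μ {ω | X ω ⊆ A} {ω | X ω ⊆ B} := by
  refine measure_mono_null ?_ (ae_iff.mp hne)
  rintro ω ⟨hA, hB⟩ ⟨x, hx⟩
  exact Set.disjoint_left.mp hAB (hA hx) (hB hx)

lemma tsum_measure_setOf_subset_le (hne : ∀ᵐ ω ∂μ, (X ω).Nonempty) {A : ℕ → Set α}
    (hA : ∀ i, NullMeasurableSet {ω | X ω ⊆ A i} μ) (hdisj : Pairwise (Function.onFun Disjoint A)) :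
    ∑' i, μ {ω | X ω ⊆ A i} ≤ μ {ω | X ω ⊆ ⋃ i, A i} := by
  rw [← measure_iUnion₀ (fun i j hij => aedisjoint_setOf_subset hne (hdisj hij)) hA]
  exact measure_mono (Set.iUnion_subset fun i ω hω => hω.trans (Set.subset_iUnion A i))

end RandomSet

theorem containment_eq_capacity_countably_additive_general
    {Ω : Type*} {n : ℕ} [MeasurableSpace Ω]
    (μ : Measure Ω)
    (X : Ω → Set (EuclideanSpace ℝ (Fin n)))
    (hne : ∀ᵐ ω ∂μ, (X ω).Nonempty)
    (hmeas : ∀ A : Set (EuclideanSpace ℝ (Fin n)), MeasurableSet A →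
      MeasurableSet {ω | X ω ⊆ A})
    (heq : ∀ A : Set (EuclideanSpace ℝ (Fin n)), MeasurableSet A →
      μ {ω | X ω ⊆ A} = μ {ω | (X ω ∩ A).Nonempty}) :
    ∀ f : ℕ → Set (EuclideanSpace ℝ (Fin n)),
      (∀ i, MeasurableSet (f i)) → Pairwise (Function.onFun Disjoint f) →
      μ {ω | X ω ⊆ ⋃ i, f i} = ∑' i, μ {ω | X ω ⊆ f i} := by
  intro f hf hdisj
  refine le_antisymm ?_ (tsum_measure_setOf_subset_le hne
    (fun i => (hmeas _ (hf i)).nullMeasurableSet) hdisj)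
  calc μ {ω | X ω ⊆ ⋃ i, f i}
      = μ {ω | (X ω ∩ ⋃ i, f i).Nonempty} := heq _ (MeasurableSet.iUnion hf)
    _ ≤ ∑' i, μ {ω | (X ω ∩ f i).Nonempty} := measure_inter_iUnion_nonempty_le f
    _ = ∑' i, μ {ω | X ω ⊆ f i} := tsum_congr fun i => (heq _ (hf i)).symm

/-- If the containment and capacity functionals of an a.s. nonempty random closed
set coincide on all measurable sets, then the common set function is countably
additive, i.e. it is a probability measure. -/
theorem containment_eq_capacity_countably_additive
    {Ω : Type*} {n : ℕ} [MeasurableSpace Ω]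
    (μ : Measure Ω) [IsProbabilityMeasure μ]
    (X : Ω → Set (EuclideanSpace ℝ (Fin n)))
    (hclosed : ∀ ω, IsClosed (X ω))
    (hne : ∀ᵐ ω ∂μ, (X ω).Nonempty)
    (hmeas : ∀ A : Set (EuclideanSpace ℝ (Fin n)), MeasurableSet A →
      MeasurableSet {ω | X ω ⊆ A})
    (heq : ∀ A : Set (EuclideanSpace ℝ (Fin n)), MeasurableSet A →
      μ {ω | X ω ⊆ A} = μ {ω | (X ω ∩ A).Nonempty}) :
    ∀ f : ℕ → Set (EuclideanSpace ℝ (Fin n)),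
      (∀ i, MeasurableSet (f i)) → Pairwise (Function.onFun Disjoint f) →
      μ {ω | X ω ⊆ ⋃ i, f i} = ∑' i, μ {ω | X ω ⊆ f i} :=
  containment_eq_capacity_countably_additive_general μ X hne hmeas heq
end

section
/- Let X and X^d be independent random closed sets with capacity transform densities π_T(x) ∝ P{x ∈ X(ω)} and L(x) = P{x ∈ X^d(ω)}, and assume 0 < ∫ π_T(x)L(x) dx < ∞ where the prior coverage integral is finite and positive. Then the capacity transform density of the posterior random set X^a(ω) = X(ω) ∩ X^d(ω) (under the probability P conditioned on X^a(ω) ≠ ∅) equals the Bayesian posterior: π_T^a(x) = π_T(x)L(x) / ∫ π_T(y)L(y) dy. -/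
open MeasureTheory ProbabilityTheory

/-- The capacity transform density of the posterior random set
`X^a(ω) = X(ω) ∩ X^d(ω)` (under the measure conditioned on `X^a ≠ ∅`) is the
Bayesian posterior of the capacity transform density of the prior random set `X`
with likelihood `L(x) = P{x ∈ X^d}`. -/
theorem capacity_transform_posterior_is_bayes
    {Ω : Type*} {n : ℕ} [MeasurableSpace Ω]
    (μ : Measure Ω) [IsProbabilityMeasure μ]
    (mS : MeasurableSpace (Set (EuclideanSpace ℝ (Fin n))))
    (hmem : ∀ y : EuclideanSpace ℝ (Fin n),
      MeasurableSet {s : Set (EuclideanSpace ℝ (Fin n)) | y ∈ s})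
    (X Xd : Ω → Set (EuclideanSpace ℝ (Fin n)))
    (hX : Measurable X) (hXd : Measurable Xd)
    (hXclosed : ∀ ω, IsClosed (X ω)) (hXdclosed : ∀ ω, IsClosed (Xd ω))
    (hindep : IndepFun X Xd μ)
    -- capacity transform density of the prior random set `X`
    (πT : EuclideanSpace ℝ (Fin n) → ℝ)
    (hπT : ∀ p, πT p =
      (μ {ω | p ∈ X ω}).toReal / ∫ y, (μ {ω | y ∈ X ω}).toReal)
    (hXcov_pos : 0 < ∫ y, (μ {ω | y ∈ X ω}).toReal)
    (hXcov_int : Integrable (fun y => (μ {ω | y ∈ X ω}).toReal) volume)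
    -- likelihood: one-point coverage of the measurement random set `X^d`
    (L : EuclideanSpace ℝ (Fin n) → ℝ)
    (hL : ∀ p, L p = (μ {ω | p ∈ Xd ω}).toReal)
    (hprod_pos : 0 < ∫ y, πT y * L y)
    -- the posterior measure: `μ` conditioned on `{X^a ≠ ∅}`
    (hne_pos : 0 < μ {ω | (X ω ∩ Xd ω).Nonempty})
    (μa : Measure Ω)
    (hμa : μa = (μ {ω | (X ω ∩ Xd ω).Nonempty})⁻¹ •
      μ.restrict {ω | (X ω ∩ Xd ω).Nonempty})
    -- capacity transform density of the posterior random set `X^a = X ∩ X^d`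
    (πTa : EuclideanSpace ℝ (Fin n) → ℝ)
    (hπTa : ∀ p, πTa p =
      (μa {ω | p ∈ X ω ∩ Xd ω}).toReal /
        ∫ y, (μa {ω | y ∈ X ω ∩ Xd ω}).toReal) :
    ∀ p, πTa p = πT p * L p / ∫ y, πT y * L y := by

  classical
  set a : EuclideanSpace ℝ (Fin n) → ℝ := fun y => (μ {ω | y ∈ X ω}).toReal with ha
  set b : EuclideanSpace ℝ (Fin n) → ℝ := fun y => (μ {ω | y ∈ Xd ω}).toReal with hb
  set I : ℝ := ∫ y, (μ {ω | y ∈ X ω}).toReal with hIdef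
  have hmeasX : ∀ q : EuclideanSpace ℝ (Fin n), MeasurableSet {ω | q ∈ X ω} :=
    fun q => hX (hmem q)
  have hmeasXd : ∀ q : EuclideanSpace ℝ (Fin n), MeasurableSet {ω | q ∈ Xd ω} :=
    fun q => hXd (hmem q)
  -- independence gives product form for the intersection coverage
  have hmul : ∀ q : EuclideanSpace ℝ (Fin n),
      μ {ω | q ∈ X ω ∩ Xd ω} = μ {ω | q ∈ X ω} * μ {ω | q ∈ Xd ω} := by
    intro q
    have h := (ProbabilityTheory.indepFun_iff_measure_inter_preimage_eq_mul.mp hindep)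
      {s | q ∈ s} {s | q ∈ s} (hmem q) (hmem q)
    have hset : {ω | q ∈ X ω ∩ Xd ω}
        = X ⁻¹' {s | q ∈ s} ∩ Xd ⁻¹' {s | q ∈ s} := by
      ext ω; simp [Set.mem_inter_iff]
    rw [hset, h]; rfl
  set c : ENNReal := μ {ω | (X ω ∩ Xd ω).Nonempty} with hc
  have hcne : c ≠ 0 := hne_pos.ne'
  have hcnet : c ≠ ⊤ := measure_ne_top μ _
  have hct : (0:ℝ) < c.toReal := ENNReal.toReal_pos hcne hcnet
  -- posterior coverage probability
  have hμaA : ∀ q : EuclideanSpace ℝ (Fin n),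
      (μa {ω | q ∈ X ω ∩ Xd ω}).toReal = a q * b q / c.toReal := by
    intro q
    have hAm : MeasurableSet {ω | q ∈ X ω ∩ Xd ω} :=
      (hmeasX q).inter (hmeasXd q)
    have hsub : {ω | q ∈ X ω ∩ Xd ω} ⊆ {ω | (X ω ∩ Xd ω).Nonempty} :=
      fun ω hω => ⟨q, hω⟩
    rw [hμa]
    rw [Measure.smul_apply, Measure.restrict_apply hAm,
      Set.inter_eq_self_of_subset_left hsub, hmul q, smul_eq_mul,
      ENNReal.toReal_mul, ENNReal.toReal_mul, ENNReal.toReal_inv]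
    rw [ha, hb]
    ring
  -- the integral of the product coverage
  set J : ℝ := ∫ y, a y * b y with hJdef
  have hint1 : (∫ y, πT y * L y) = J / I := by
    have : ∀ y : EuclideanSpace ℝ (Fin n), πT y * L y = a y * b y / I := by
      intro y; rw [hπT y, hL y]; rw [ha, hb]; ring
    rw [integral_congr_ae (Filter.Eventually.of_forall this), ← integral_div]
  have hJpos : (0:ℝ) < J := by
    have h1 : (0:ℝ) < J / I := by rw [← hint1]; exact hprod_pos
    rcases div_pos_iff.mp h1 with ⟨h, _⟩ | ⟨_, h⟩
    · exact h
    · exact absurd hXcov_pos (not_lt.mpr h.le)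
  have hint2 : (∫ y, (μa {ω | y ∈ X ω ∩ Xd ω}).toReal) = J / c.toReal := by
    rw [integral_congr_ae (Filter.Eventually.of_forall hμaA), ← integral_div]
  intro p
  rw [hπTa p, hμaA p, hint2, hint1, hπT p, hL p]
  rw [ha, hb] at *
  field_simp
end

section
/- In the two-point example, Dempster's rule yields a strictly more informative posterior than selection-wise Bayesian updating: let Ω = {ω₁, ω₂} with P(ω₁) = p ∈ (0,1), prior random set X(ω₁) = 𝒳₁, X(ω₂) = 𝒳₂, and data random set X^d(ω) = {x₁, x₂} for all ω, where x₁ ∈ 𝒳₁ \ 𝒳₂ and x₂ ∈ 𝒳₂ \ 𝒳₁. Then the Dempster posterior X^a is a random singleton with P(X^a = {x₁}) = p and P(X^a = {x₂}) = 1 − p; whereas for every α ∈ [0,1] there exists a selection random variable x(ω) ∈ X(ω) whose Bayesian update given {x(ω) ∈ {x₁, x₂}} assigns probability α to x₁ (for α ∈ {0,1}, exactly; in general whenever 𝒳₁, 𝒳₂ allow mass at x₁, x₂). -/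
open MeasureTheory

/-- Two-point example: with prior random set `X(ω₁) = 𝒳₁`, `X(ω₂) = 𝒳₂`
(probabilities `p`, `1−p`) and data random set `X^d ≡ {x₁, x₂}` where
`x₁ ∈ 𝒳₁ \ 𝒳₂` and `x₂ ∈ 𝒳₂ \ 𝒳₁`, Dempster's rule yields a random singleton
with `P(X^a = {x₁}) = p`, `P(X^a = {x₂}) = 1 − p`; whereas selection-wise
Bayesian updating can realize any posterior probability `α ∈ [0,1]` for `x₁`
(whenever `𝒳₁`, `𝒳₂` allow mass away from `x₁`, `x₂`), independently of `p`. -/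
theorem two_point_dempster_vs_selectionwise_bayes
    {A : Type*} [MeasurableSpace A] [MeasurableSingletonClass A]
    (𝒳₁ 𝒳₂ : Set A) (x₁ x₂ : A)
    (hx₁ : x₁ ∈ 𝒳₁) (hx₁' : x₁ ∉ 𝒳₂)
    (hx₂ : x₂ ∈ 𝒳₂) (hx₂' : x₂ ∉ 𝒳₁)
    (h𝒳₁ : ∃ y ∈ 𝒳₁, y ≠ x₁) (h𝒳₂ : ∃ y ∈ 𝒳₂, y ≠ x₂)
    (p : ℝ) (hp0 : 0 < p) (hp1 : p < 1)
    (μ : Measure Bool)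
    (hμ : μ = ENNReal.ofReal p • Measure.dirac true +
      ENNReal.ofReal (1 - p) • Measure.dirac false)
    (X : Bool → Set A)
    (hX : X = fun b => if b then 𝒳₁ else 𝒳₂) :
    -- Dempster's rule: the posterior is a random singleton
    (𝒳₁ ∩ {x₁, x₂} = {x₁} ∧ 𝒳₂ ∩ {x₁, x₂} = {x₂}) ∧
    μ {ω | X ω ∩ {x₁, x₂} = {x₁}} = ENNReal.ofReal p ∧
    μ {ω | X ω ∩ {x₁, x₂} = {x₂}} = ENNReal.ofReal (1 - p) ∧
    -- selection-wise Bayesian updating realizes every `α ∈ [0,1]`,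
    -- independently of `p`
    (∀ α ∈ Set.Icc (0 : ℝ) 1,
      ∃ Q₁ Q₂ : Measure A, IsProbabilityMeasure Q₁ ∧ IsProbabilityMeasure Q₂ ∧
        Q₁ 𝒳₁ = 1 ∧ Q₂ 𝒳₂ = 1 ∧
        (0 < (ENNReal.ofReal p • Q₁ + ENNReal.ofReal (1 - p) • Q₂)
          ({x₁, x₂} : Set A)) ∧
        ((ENNReal.ofReal p • Q₁ + ENNReal.ofReal (1 - p) • Q₂)
            ({x₁} : Set A)).toReal /
          ((ENNReal.ofReal p • Q₁ + ENNReal.ofReal (1 - p) • Q₂)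
            ({x₁, x₂} : Set A)).toReal = α) := by
  obtain ⟨y₁, hy₁, hy₁x⟩ := h𝒳₁
  obtain ⟨y₂, hy₂, hy₂x⟩ := h𝒳₂
  have hne : x₁ ≠ x₂ := fun h => hx₂' (h ▸ hx₁)
  have hy₁x₂ : y₁ ≠ x₂ := fun h => hx₂' (h ▸ hy₁)
  have hy₂x₁ : y₂ ≠ x₁ := fun h => hx₁' (h ▸ hy₂)
  have hS1 : 𝒳₁ ∩ {x₁, x₂} = {x₁} := by
    ext a
    simp only [Set.mem_inter_iff, Set.mem_insert_iff, Set.mem_singleton_iff]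
    constructor
    · rintro ⟨ha, (rfl | rfl)⟩
      · rfl
      · exact absurd ha hx₂'
    · rintro rfl; exact ⟨hx₁, Or.inl rfl⟩
  have hS2 : 𝒳₂ ∩ {x₁, x₂} = {x₂} := by
    ext a
    simp only [Set.mem_inter_iff, Set.mem_insert_iff, Set.mem_singleton_iff]
    constructor
    · rintro ⟨ha, (rfl | rfl)⟩
      · exact absurd ha hx₁'
      · rfl
    · rintro rfl; exact ⟨hx₂, Or.inr rfl⟩
  have hne1 : ({x₂} : Set A) ≠ {x₁} := by
    simp [Set.singleton_eq_singleton_iff]; exact Ne.symm hne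
  have hne2 : ({x₁} : Set A) ≠ {x₂} := by
    simp [Set.singleton_eq_singleton_iff]; exact hne
  have hset1 : {ω | X ω ∩ {x₁, x₂} = {x₁}} = ({true} : Set Bool) := by
    ext b; cases b <;> simp [hX, hS1, hS2, hne1]
  have hset2 : {ω | X ω ∩ {x₁, x₂} = {x₂}} = ({false} : Set Bool) := by
    ext b; cases b <;> simp [hX, hS1, hS2, hne2]
  refine ⟨⟨hS1, hS2⟩, ?_, ?_, ?_⟩
  · rw [hset1, hμ]
    simp [Measure.dirac_apply]
  · rw [hset2, hμ]
    simp [Measure.dirac_apply]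
  · intro α hα
    obtain ⟨hα0, hα1⟩ := hα
    set t : ℝ := α * (1 - p) with ht_def
    set s : ℝ := (1 - α) * p with hs_def
    have ht0 : 0 ≤ t := by nlinarith
    have ht1 : t ≤ 1 := by nlinarith
    have hs0 : 0 ≤ s := by nlinarith
    have hs1 : s ≤ 1 := by nlinarith
    have e1 : Measure.dirac x₁ ({x₁} : Set A) = 1 := by simp [Measure.dirac_apply]
    have e2 : Measure.dirac y₁ ({x₁} : Set A) = 0 := by
      simp [Measure.dirac_apply, Set.indicator, hy₁x]
    have e3 : Measure.dirac x₂ ({x₁} : Set A) = 0 := by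
      simp [Measure.dirac_apply, Set.indicator, Ne.symm hne]
    have e4 : Measure.dirac y₂ ({x₁} : Set A) = 0 := by
      simp [Measure.dirac_apply, Set.indicator, hy₂x₁]
    have f1 : Measure.dirac x₁ ({x₁, x₂} : Set A) = 1 := by simp [Measure.dirac_apply]
    have f2 : Measure.dirac y₁ ({x₁, x₂} : Set A) = 0 := by
      simp [Measure.dirac_apply, Set.indicator, hy₁x, hy₁x₂]
    have f3 : Measure.dirac x₂ ({x₁, x₂} : Set A) = 1 := by simp [Measure.dirac_apply]
    have f4 : Measure.dirac y₂ ({x₁, x₂} : Set A) = 0 := by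
      simp [Measure.dirac_apply, Set.indicator, hy₂x₁, hy₂x]
    set Q₁ : Measure A :=
      ENNReal.ofReal t • Measure.dirac x₁ + ENNReal.ofReal (1 - t) • Measure.dirac y₁ with hQ₁
    set Q₂ : Measure A :=
      ENNReal.ofReal s • Measure.dirac x₂ + ENNReal.ofReal (1 - s) • Measure.dirac y₂ with hQ₂
    have h1 : (ENNReal.ofReal p • Q₁ + ENNReal.ofReal (1 - p) • Q₂) ({x₁, x₂} : Set A) =
        ENNReal.ofReal (p * (1 - p)) := by
      simp only [hQ₁, hQ₂, Measure.add_apply, Measure.smul_apply, smul_eq_mul,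
        f1, f2, f3, f4, mul_one, mul_zero, add_zero, zero_add]
      rw [← ENNReal.ofReal_mul hp0.le, ← ENNReal.ofReal_mul (by linarith : (0:ℝ) ≤ 1 - p),
        ← ENNReal.ofReal_add (by nlinarith) (by nlinarith)]
      congr 1
      rw [ht_def, hs_def]; ring
    have h2 : (ENNReal.ofReal p • Q₁ + ENNReal.ofReal (1 - p) • Q₂) ({x₁} : Set A) =
        ENNReal.ofReal (p * t) := by
      simp only [hQ₁, hQ₂, Measure.add_apply, Measure.smul_apply, smul_eq_mul,
        e1, e2, e3, e4, mul_one, mul_zero, add_zero, zero_add]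
      rw [← ENNReal.ofReal_mul hp0.le]
    refine ⟨Q₁, Q₂, ?_, ?_, ?_, ?_, ?_, ?_⟩
    · constructor
      simp only [hQ₁, Measure.add_apply, Measure.smul_apply, smul_eq_mul,
        Measure.dirac_apply_of_mem (Set.mem_univ _), mul_one]
      rw [← ENNReal.ofReal_add ht0 (by linarith)]
      norm_num
    · constructor
      simp only [hQ₂, Measure.add_apply, Measure.smul_apply, smul_eq_mul,
        Measure.dirac_apply_of_mem (Set.mem_univ _), mul_one]
      rw [← ENNReal.ofReal_add hs0 (by linarith)]
      norm_num
    · simp only [hQ₁, Measure.add_apply, Measure.smul_apply, smul_eq_mul,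
        Measure.dirac_apply_of_mem hx₁, Measure.dirac_apply_of_mem hy₁, mul_one]
      rw [← ENNReal.ofReal_add ht0 (by linarith)]
      norm_num
    · simp only [hQ₂, Measure.add_apply, Measure.smul_apply, smul_eq_mul,
        Measure.dirac_apply_of_mem hx₂, Measure.dirac_apply_of_mem hy₂, mul_one]
      rw [← ENNReal.ofReal_add hs0 (by linarith)]
      norm_num
    · rw [h1]
      exact ENNReal.ofReal_pos.mpr (mul_pos hp0 (by linarith))
    · rw [h1, h2, ENNReal.toReal_ofReal (by nlinarith), ENNReal.toReal_ofReal (by nlinarith),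
        ht_def]
      have hp' : p ≠ 0 := ne_of_gt hp0
      have h1p : (1 : ℝ) - p ≠ 0 := by linarith
      field_simp
end
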